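/- Let A be a mutually uncorrelated set of words of length n ≥ 2 over the four-letter DNA alphabet {A,T,G,C} in which every word ends with the letter G, and fix a = (a_1,…,a_n) ∈ A. For 1 ≤ i ≤ n−1 let k_i = |{A,C,T} \ {a_i}| (so k_i = 2 if a_i ∈ {A,C,T} and k_i = 3 if a_i = G), and define G_{n,ℓ} by G_{n,ℓ} = 3^ℓ for 0 ≤ ℓ ≤ n−1 and G_{n,ℓ} = ∑_{i=1}^{n−1} k_i · G_{n,ℓ−i} for ℓ ≥ n. Then for every ℓ ≥ 0 there is an injection from {0, 1, …, G_{n,ℓ}−1} into C_A(ℓ); in particular |C_A(ℓ)| ≥ G_{n,ℓ}. -/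

import Mathlib

/-- The four-letter DNA alphabet. -/
inductive DNA | A | T | G | C
deriving DecidableEq

/-- Hamming distance between two words (of equal length) given as lists. -/
def hammingD {α : Type*} [DecidableEq α] (x y : List α) : ℕ :=
  (x.zip y).countP (fun p => decide (p.1 ≠ p.2))

/-- A binary word has `D`-bounded running digital sum if in every prefix the
numbers of ones and zeros differ by at most `D`. -/
def brds (D : ℕ) (w : List Bool) : Prop :=
  ∀ k ≤ w.length,
    (((w.take k).count true : ℤ) - ((w.take k).count false : ℤ)).natAbs ≤ D

/-- The letters `G`, `C` of the DNA alphabet. -/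
def isGC : DNA → Bool
  | DNA.G => true
  | DNA.C => true
  | _ => false

/-- A DNA word is `D`-GC-prefix-balanced if in every prefix the number of
letters from {G,C} and the number of letters from {A,T} differ by at most `D`. -/
def gcpb (D : ℕ) (w : List DNA) : Prop :=
  ∀ k ≤ w.length,
    (((w.take k).countP isGC : ℤ) - ((w.take k).countP (fun c => !(isGC c)) : ℤ)).natAbs ≤ D

/-- A word is self-uncorrelated if no proper nonempty prefix equals the suffix
of the same length. -/
def selfUncorr {α : Type*} (w : List α) : Prop :=
  ∀ k, 1 ≤ k → k ≤ w.length - 1 → w.take k ≠ w.drop (w.length - k)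

/-- A set of words is mutually uncorrelated if every word is self-uncorrelated
and for every ordered pair of distinct words `x`, `y` no nonempty prefix of `y`
equals a suffix of `x` of the same length. -/
def mutUncorr {α : Type*} (S : Set (List α)) : Prop :=
  (∀ w ∈ S, selfUncorr w) ∧
  ∀ x ∈ S, ∀ y ∈ S, x ≠ y →
    ∀ k, 1 ≤ k → k ≤ x.length → y.take k ≠ x.drop (x.length - k)

/-- A Dyck word: equal numbers of ones and zeros, and every prefix has at least
as many ones as zeros. -/
def isDyck (w : List Bool) : Prop :=
  w.count true = w.count false ∧
  ∀ k ≤ w.length, (w.take k).count false ≤ (w.take k).count true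

/-- The height of a (Dyck) word is at most `D`: in every prefix the number of
ones exceeds the number of zeros by at most `D`. -/
def heightLe (D : ℕ) (w : List Bool) : Prop :=
  ∀ k ≤ w.length, ((w.take k).count true : ℤ) - ((w.take k).count false : ℤ) ≤ (D : ℤ)

/-- `avoidCount A ℓ`: the number of DNA words of length `ℓ` containing no word
of `A` as a contiguous substring. -/
noncomputable def avoidCount (A : Finset (List DNA)) (l : ℕ) : ℕ :=
  Set.ncard {w : List DNA | w.length = l ∧ ∀ a ∈ A, ¬ a <:+: w}

/-!
Fix `a ∈ A` and `m = n - 1`. For `ℓ ≤ m` take all words of length `ℓ` over `{A, C, T}`; for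
`ℓ > m` take the words `a₁ ⋯ a_i b w` with `i < m`, `b ∈ {A, C, T}`, `b ≠ a_{i+1}` and `w` such a
word of length `ℓ - i - 1`. The block `a₁ ⋯ a_i b` is read off as the longest common prefix with
`a` followed by the next letter, so distinct choices give distinct words and there are exactly
`G_{n,ℓ}` of them. Every `G` in such a word closes a copy of a prefix `a₁ ⋯ a_j` with `0 < j < m`,
so an occurrence of `x ∈ A`, which ends in `G`, would make that prefix a proper suffix of `x`,
contradicting mutual uncorrelation.
-/

open Finset

variable {α : Type*}

theorem List.take_append_cons_ne {a : List α} {i j : ℕ} (hij : i < j) (hj : j ≤ a.length) {b b' : α}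
    (hb : a[i]? ≠ some b) (w w' : List α) : a.take i ++ b :: w ≠ a.take j ++ b' :: w' := by
  intro h
  have hleft : (a.take i ++ b :: w)[i]? = some b := by
    simp [Nat.min_eq_left (show i ≤ a.length by omega)]
  have hright : (a.take j ++ b' :: w')[i]? = a[i]? := by
    rw [List.getElem?_append_left (by rw [List.length_take]; omega), List.getElem?_take_of_lt hij]
  rw [h, hright] at hleft
  exact hb hleft

theorem List.take_append_cons_inj {a : List α} {i j : ℕ} (hi : i ≤ a.length) (hj : j ≤ a.length)
    {b b' : α} (hb : a[i]? ≠ some b) (hb' : a[j]? ≠ some b') {w w' : List α}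
    (h : a.take i ++ b :: w = a.take j ++ b' :: w') : i = j ∧ b = b' ∧ w = w' := by
  obtain rfl : i = j := by
    rcases lt_trichotomy i j with hij | rfl | hji
    · exact absurd h (take_append_cons_ne hij hj hb w w')
    · rfl
    · exact absurd h.symm (take_append_cons_ne hji hi hb' w' w)
  simpa using h

def EachOccurrenceEndsPrefix (g : α) (a : List α) (m : ℕ) (w : List α) : Prop :=
  ∀ p s, w = p ++ g :: s → ∃ j, 0 < j ∧ j < m ∧ a.take j <:+ p ++ [g]

section Invariant

variable {a : List α} {m : ℕ}

theorem eachOccurrenceEndsPrefix_of_not_mem {g : α} {w : List α} (hg : g ∉ w) :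
    EachOccurrenceEndsPrefix g a m w := by
  rintro p s rfl
  simp at hg

theorem EachOccurrenceEndsPrefix.take_append_cons {g b : α} {i : ℕ} {w : List α} (hi : i < m)
    (hb : b ≠ g) (hw : EachOccurrenceEndsPrefix g a m w) :
    EachOccurrenceEndsPrefix g a m (a.take i ++ b :: w) := by
  intro p s h
  rcases List.append_eq_append_iff.1 h with ⟨_ | ⟨c, q⟩, rfl, h'⟩ | ⟨_ | ⟨c, q⟩, hp, h'⟩
  · exact absurd (List.cons.inj h').1 hb
  · obtain ⟨rfl, rfl⟩ := List.cons.inj h'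
    obtain ⟨j, hj, hjm, hsuf⟩ := hw q s rfl
    exact ⟨j, hj, hjm, hsuf.trans ⟨a.take i ++ [b], by simp⟩⟩
  · exact absurd (List.cons.inj h').1.symm hb
  · obtain rfl := (List.cons.inj h').1
    have hlen : p.length + 1 ≤ i := by
      have := congrArg List.length hp
      simp only [List.length_take, List.length_append, List.length_cons] at this
      omega
    refine ⟨p.length + 1, by omega, by omega, ?_⟩
    have hprefix : a.take (p.length + 1) = p ++ [g] := by
      rw [← Nat.min_eq_left hlen, ← List.take_take, hp]
      simp [List.take_append]
    exact hprefix ▸ List.suffix_refl _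

theorem EachOccurrenceEndsPrefix.not_infix {g : α} {w x : List α}
    (hw : EachOccurrenceEndsPrefix g a m w) (hx : x.getLast? = some g) (hm : m ≤ x.length)
    (hpre : ∀ j, 0 < j → j < m → ¬ a.take j <:+ x) : ¬ x <:+: w := by
  rintro ⟨s, t, rfl⟩
  obtain ⟨y, rfl⟩ := List.getLast?_eq_some_iff.1 hx
  obtain ⟨j, hj, hjm, hsuf⟩ := hw (s ++ y) t (by simp)
  refine hpre j hj hjm (List.suffix_of_suffix_length_le (l₃ := s ++ (y ++ [g])) ?_ ?_ ?_)
  · simpa using hsuf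
  · exact List.suffix_append _ _
  · simp only [List.length_append, List.length_cons, List.length_nil, zero_add, List.length_take,
      inf_le_iff] at hm ⊢
    omega

end Invariant

theorem mutUncorr.not_take_suffix {S : Set (List α)} (hS : mutUncorr S) {x a : List α}
    (hx : x ∈ S) (ha : a ∈ S) {j : ℕ} (hj : 0 < j) (hjx : j < x.length) (hja : j ≤ a.length) :
    ¬ a.take j <:+ x := by
  rw [List.suffix_iff_eq_drop, List.length_take, Nat.min_eq_left hja]
  by_cases hxa : x = a
  · subst hxa
    exact hS.1 x hx j hj (by omega)
  · exact hS.2 x hx a ha hxa j hj hjx.le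

theorem Finset.sum_Icc_one_eq_sum_range {M : Type*} [AddCommMonoid M] (f : ℕ → M) (n : ℕ) :
    ∑ i ∈ Icc 1 n, f i = ∑ i ∈ range n, f (i + 1) := by
  rw [← Ico_add_one_right_eq_Icc, sum_Ico_eq_sum_range]
  simp [add_comm]

theorem Finset.exists_injective_fin_of_forall {β : Type*} {P : β → Prop} (s : Finset β)
    (h : ∀ x ∈ s, P x) : ∃ f : Fin #s → β, Function.Injective f ∧ ∀ x, P (f x) :=
  ⟨fun x => s.equivFin.symm x, Subtype.val_injective.comp s.equivFin.symm.injective,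
    fun x => h _ (s.equivFin.symm x).2⟩

section BlockWords

variable [DecidableEq α]

def wordsOver (F : Finset α) : ℕ → Finset (List α)
  | 0 => {[]}
  | l + 1 => (F ×ˢ wordsOver F l).image fun p => p.1 :: p.2

theorem mem_wordsOver {F : Finset α} {l : ℕ} {w : List α} :
    w ∈ wordsOver F l ↔ w.length = l ∧ ∀ b ∈ w, b ∈ F := by
  induction l generalizing w with
  | zero => simp +contextual [wordsOver]
  | succ l ih => cases w <;> simp [wordsOver, ih, and_left_comm]

theorem card_wordsOver (F : Finset α) (l : ℕ) : #(wordsOver F l) = #F ^ l := by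
  induction l with
  | zero => rfl
  | succ l ih =>
    have hcons : Function.Injective fun p : α × List α => p.1 :: p.2 :=
      fun p q h => Prod.ext (List.cons.inj h).1 (List.cons.inj h).2
    rw [wordsOver, card_image_of_injective _ hcons, card_product, ih, pow_succ, mul_comm]

theorem Finset.filter_getElem?_ne_eq_sdiff (F : Finset α) {a : List α} {i : ℕ} (hi : i < a.length)
    (d : α) : F.filter (a[i]? ≠ some ·) = F \ {a.getD i d} := by
  ext b
  simp [List.getD_eq_getElem?_getD, List.getElem?_eq_getElem hi, eq_comm]

def blockWords (F : Finset α) (a : List α) (m : ℕ) : ℕ → Finset (List α)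
  | 0 => {[]}
  | l + 1 =>
    if l + 1 ≤ m then wordsOver F (l + 1)
    else ((range m).sigma fun i => F.filter (a[i]? ≠ some ·) ×ˢ blockWords F a m (l - i)).image
      fun x => a.take x.1 ++ x.2.1 :: x.2.2

variable {F : Finset α} {a : List α} {m l : ℕ}

theorem blockWords_of_le (h : l ≤ m) : blockWords F a m l = wordsOver F l := by
  cases l with
  | zero => rw [blockWords]; rfl
  | succ l => rw [blockWords, if_pos h]

theorem blockWords_of_lt (h : m < l) :
    blockWords F a m l = ((range m).sigma fun i =>
      F.filter (a[i]? ≠ some ·) ×ˢ blockWords F a m (l - (i + 1))).image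
        fun x => a.take x.1 ++ x.2.1 :: x.2.2 := by
  obtain ⟨l, rfl⟩ : ∃ l', l = l' + 1 := ⟨l - 1, by omega⟩
  rw [blockWords, if_neg (by omega)]
  simp only [Nat.add_sub_add_right]

theorem card_blockWords_of_lt (hm : m ≤ a.length) (h : m < l) :
    #(blockWords F a m l) =
      ∑ i ∈ range m, #(F.filter (a[i]? ≠ some ·)) * #(blockWords F a m (l - (i + 1))) := by
  rw [blockWords_of_lt h, card_image_of_injOn, card_sigma]
  · simp only [card_product]
  · rintro ⟨i, b, w⟩ hx ⟨j, b', w'⟩ hy hxy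
    simp only [coe_sigma, Set.mem_sigma_iff, coe_range, Set.mem_Iio, coe_product, Set.mem_prod,
      coe_filter, Set.mem_ofPred_eq] at hx hy
    obtain ⟨rfl, rfl, rfl⟩ := List.take_append_cons_inj (by omega) (by omega) hx.2.1.2 hy.2.1.2 hxy
    rfl

theorem length_of_mem_blockWords (hm : m ≤ a.length) {w : List α} (hw : w ∈ blockWords F a m l) :
    w.length = l := by
  induction l using Nat.strong_induction_on generalizing w with
  | _ l ih =>
  rcases le_or_gt l m with h | h
  · rw [blockWords_of_le h] at hw
    exact (mem_wordsOver.1 hw).1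
  · rw [blockWords_of_lt h] at hw
    obtain ⟨⟨i, b, w'⟩, hx, rfl⟩ := mem_image.1 hw
    simp only [mem_sigma, mem_range, mem_product] at hx
    simp only [List.length_append, List.length_take, List.length_cons, ih _ (by omega) hx.2.2]
    omega

theorem eachOccurrenceEndsPrefix_of_mem_blockWords {g : α} (hg : g ∉ F) {w : List α}
    (hw : w ∈ blockWords F a m l) : EachOccurrenceEndsPrefix g a m w := by
  induction l using Nat.strong_induction_on generalizing w with
  | _ l ih =>
  rcases le_or_gt l m with h | h
  · rw [blockWords_of_le h] at hw
    exact eachOccurrenceEndsPrefix_of_not_mem fun hgw => hg ((mem_wordsOver.1 hw).2 g hgw)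
  · rw [blockWords_of_lt h] at hw
    obtain ⟨⟨i, b, w'⟩, hx, rfl⟩ := mem_image.1 hw
    simp only [mem_sigma, mem_range, mem_product, mem_filter] at hx
    exact (ih _ (by omega) hx.2.2).take_append_cons hx.1 (ne_of_mem_of_not_mem hx.2.1.1 hg)

theorem card_blockWords_eq (hm : m ≤ a.length) {G : ℕ → ℕ} (hG₁ : ∀ l ≤ m, G l = #F ^ l)
    (hG₂ : ∀ l, m < l → G l = ∑ i ∈ range m, #(F.filter (a[i]? ≠ some ·)) * G (l - (i + 1)))
    (l : ℕ) : #(blockWords F a m l) = G l := by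
  induction l using Nat.strong_induction_on with
  | _ l ih =>
  rcases le_or_gt l m with h | h
  · rw [blockWords_of_le h, card_wordsOver, hG₁ l h]
  · rw [card_blockWords_of_lt hm h, hG₂ l h]
    exact sum_congr rfl fun i _ => by rw [ih _ (by omega)]

end BlockWords

instance : Fintype DNA :=
  ⟨{DNA.A, DNA.T, DNA.G, DNA.C}, by rintro ⟨⟩ <;> simp⟩

theorem stmt16_general (n : ℕ) (A : Finset (List DNA))
    (hlen : ∀ w ∈ A, w.length = n)
    (hmu : mutUncorr (A : Set (List DNA)))
    (hG : ∀ w ∈ A, w.getLast? = some DNA.G)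
    (a : List DNA) (ha : a ∈ A)
    (k : ℕ → ℕ)
    (hk : ∀ i, 1 ≤ i → i ≤ n - 1 →
      k i = (({DNA.A, DNA.C, DNA.T} : Finset DNA) \ {a.getD (i - 1) DNA.A}).card)
    (Gm : ℕ → ℕ)
    (hGm1 : ∀ l, l ≤ n - 1 → Gm l = 3 ^ l)
    (hGm2 : ∀ l, n ≤ l → Gm l = ∑ i ∈ Finset.Icc 1 (n - 1), k i * Gm (l - i)) :
    ∀ l : ℕ,
      (∃ f : Fin (Gm l) → List DNA, Function.Injective f ∧
        ∀ x, (f x).length = l ∧ ∀ w ∈ A, ¬ w <:+: f x) ∧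
      Gm l ≤ avoidCount A l := by
  have han : a.length = n := hlen a ha
  have hcode : ∀ l, #(blockWords {DNA.A, DNA.C, DNA.T} a (n - 1) l) = Gm l :=
    card_blockWords_eq (by omega) hGm1 fun l hl => by
      rw [hGm2 l (by omega), sum_Icc_one_eq_sum_range]
      refine sum_congr rfl fun i hi => ?_
      rw [mem_range] at hi
      rw [hk (i + 1) (by omega) (by omega), Nat.add_sub_cancel,
        filter_getElem?_ne_eq_sdiff _ (by omega)]
  have havoid : ∀ l, ∀ w ∈ blockWords {DNA.A, DNA.C, DNA.T} a (n - 1) l,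
      w.length = l ∧ ∀ x ∈ A, ¬ x <:+: w := fun l w hw =>
    ⟨length_of_mem_blockWords (by omega) hw, fun x hx =>
      (eachOccurrenceEndsPrefix_of_mem_blockWords (g := DNA.G) (by decide) hw).not_infix (hG x hx)
        (by rw [hlen x hx]; omega) fun j hj hjm =>
          hmu.not_take_suffix hx ha hj (by rw [hlen x hx]; omega) (by omega)⟩
  intro l
  refine ⟨hcode l ▸ Finset.exists_injective_fin_of_forall _ (havoid l), ?_⟩
  rw [← hcode l, avoidCount, ← Set.ncard_coe_finset]
  exact Set.ncard_le_ncard (fun w hw => havoid l w hw)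
    ((List.finite_length_eq DNA l).subset fun w hw => hw.1)

/-- for a mutually uncorrelated set `A` of DNA words of length
`n ≥ 2` all ending in `G`, and `a ∈ A`, with `k_i = |{A,C,T} \ {a_i}|` and
`G_{n,ℓ}` defined by `G_{n,ℓ} = 3^ℓ` for `ℓ ≤ n-1` and
`G_{n,ℓ} = ∑_{i=1}^{n-1} k_i G_{n,ℓ-i}` for `ℓ ≥ n`, there is an injection of
`{0,…,G_{n,ℓ}-1}` into `C_A(ℓ)`; in particular `|C_A(ℓ)| ≥ G_{n,ℓ}`. -/
theorem stmt16 (n M : ℕ) (hn : 2 ≤ n) (A : Finset (List DNA))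
    (hcard : A.card = M) (hlen : ∀ w ∈ A, w.length = n)
    (hmu : mutUncorr (A : Set (List DNA)))
    (hG : ∀ w ∈ A, w.getLast? = some DNA.G)
    (a : List DNA) (ha : a ∈ A)
    (k : ℕ → ℕ)
    (hk : ∀ i, 1 ≤ i → i ≤ n - 1 →
      k i = (({DNA.A, DNA.C, DNA.T} : Finset DNA) \ {a.getD (i - 1) DNA.A}).card)
    (Gm : ℕ → ℕ)
    (hGm1 : ∀ l, l ≤ n - 1 → Gm l = 3 ^ l)
    (hGm2 : ∀ l, n ≤ l → Gm l = ∑ i ∈ Finset.Icc 1 (n - 1), k i * Gm (l - i)) :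
    ∀ l : ℕ,
      (∃ f : Fin (Gm l) → List DNA, Function.Injective f ∧
        ∀ x, (f x).length = l ∧ ∀ w ∈ A, ¬ w <:+: f x) ∧
      Gm l ≤ avoidCount A l :=
  stmt16_general n A hlen hmu hG a ha k hk Gm hGm1 hGm2
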